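/- arXiv:0705.2878 — 3 statements merged into one kernel-verified Lean document; each statement's English description precedes it below -/
import Mathlib

section
/- Let σ > 0, let (n_1,…,n_I) be a solution of (FP_σ), and set S^σ := −σ ln(Σ_{i=1}^I n_i). Then for every x ∈ [0,1], (S^σ)'(x) = (Σ_{i=1}^I ψ_i'(x) n_i(x)) / (Σ_{i=1}^I n_i(x)), and consequently the total flux estimate holds: min_{1≤i≤I} ψ_i'(x) ≤ (S^σ)'(x) ≤ max_{1≤i≤I} ψ_i'(x) for every x ∈ [0,1]. -/
/-!
Summing the equations of (FP_σ) over `i`, the coupling terms cancel because `ν i i` is the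
`i`-th column sum of the off-diagonal `ν`, so the total flux `J = ∑ i, (σ n_i' + ψ_i' n_i)` has
zero derivative in `(0,1)`; it vanishes at `0` by the boundary conditions, hence on all of
`[0,1]`. With `N = ∑ i, n i`, `J = 0` reads `-σ N' = ∑ i, ψ_i' n_i`, so
`(S^σ)' = -σ N'/N = ∑ i, ψ_i' n_i / N`, a weighted average of the `ψ_i'` with positive weights.
-/

open Real Set MeasureTheory Filter

/-- A solution of the Fokker–Planck system (FP_σ): `n i` are C², strictly positive
on `[0,1]`, satisfy the elliptic system in `(0,1)` and the zero-flux boundary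
conditions at `0` and `1`. -/
def IsFPSolution {I : ℕ} (ψ : Fin I → ℝ → ℝ) (ν : Fin I → Fin I → ℝ)
    (σ : ℝ) (n : Fin I → ℝ → ℝ) : Prop :=
  (∀ i, ContDiff ℝ 2 (n i)) ∧
  (∀ i, ∀ x ∈ Set.Icc (0:ℝ) 1, 0 < n i x) ∧
  (∀ i, ∀ x ∈ Set.Ioo (0:ℝ) 1,
    -σ * deriv (deriv (n i)) x - deriv (fun y => deriv (ψ i) y * n i y) x
      + ν i i * n i x = ∑ j ∈ Finset.univ.filter (· ≠ i), ν i j * n j x) ∧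
  (∀ i, ∀ x ∈ ({0, 1} : Set ℝ), σ * deriv (n i) x + deriv (ψ i) x * n i x = 0)

section WeightedAverage

variable {ι : Type*} [Fintype ι] (f : ι → ℝ) {w : ι → ℝ}

theorem ciInf_le_sum_mul_div_sum (hw : ∀ i, 0 ≤ w i) (hW : 0 < ∑ i, w i) :
    (⨅ i, f i) ≤ (∑ i, f i * w i) / ∑ i, w i := by
  rw [le_div_iff₀ hW, Finset.mul_sum]
  exact Finset.sum_le_sum fun i _ =>
    mul_le_mul_of_nonneg_right (ciInf_le (Set.finite_range f).bddBelow i) (hw i)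

theorem sum_mul_div_sum_le_ciSup (hw : ∀ i, 0 ≤ w i) (hW : 0 < ∑ i, w i) :
    (∑ i, f i * w i) / ∑ i, w i ≤ ⨆ i, f i := by
  rw [div_le_iff₀ hW, Finset.mul_sum]
  exact Finset.sum_le_sum fun i _ =>
    mul_le_mul_of_nonneg_right (le_ciSup (Set.finite_range f).bddAbove i) (hw i)

end WeightedAverage

theorem sum_diag_mul_sub_sum_offDiag_eq_zero {ι : Type*} [Fintype ι] [DecidableEq ι]
    (ν : ι → ι → ℝ) (hν : ∀ i, ν i i = ∑ j ∈ Finset.univ.filter (· ≠ i), ν j i) (v : ι → ℝ) :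
    ∑ i, (ν i i * v i - ∑ j ∈ Finset.univ.filter (· ≠ i), ν i j * v j) = 0 := by
  rw [Finset.sum_sub_distrib, sub_eq_zero]
  simp only [hν, Finset.sum_mul]
  simp only [Finset.sum_filter]
  rw [Finset.sum_comm]
  exact Finset.sum_congr rfl fun i _ => Finset.sum_congr rfl fun j _ => if_congr ne_comm rfl rfl

theorem eq_of_hasDerivAt_zero_on_Ioo {f : ℝ → ℝ} {a b x : ℝ} (hf : ContinuousOn f (Icc a b))
    (hf' : ∀ y ∈ Ioo a b, HasDerivAt f 0 y) (hx : x ∈ Icc a b) : f x = f a := by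
  rcases hx.1.eq_or_lt with rfl | hax
  · rfl
  obtain ⟨c, -, hc⟩ := exists_hasDerivAt_eq_slope f (fun _ => 0) hax
    (hf.mono (Icc_subset_Icc_right hx.2)) fun y hy => hf' y ⟨hy.1, hy.2.trans_le hx.2⟩
  rwa [eq_comm, div_eq_zero_iff, sub_eq_zero, or_iff_left (sub_ne_zero.mpr hax.ne')] at hc

theorem HasDerivAt.neg_mul_log_of_add_eq_zero {N : ℝ → ℝ} {N' F σ x : ℝ}
    (hN : HasDerivAt N N' x) (hNx : N x ≠ 0) (hflux : σ * N' + F = 0) :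
    HasDerivAt (fun y => -σ * Real.log (N y)) (F / N x) x := by
  refine ((hN.log hNx).const_mul (-σ)).congr_deriv ?_
  rw [eq_neg_of_add_eq_zero_right hflux]
  ring

noncomputable def flux (ψ : ℝ → ℝ) (σ : ℝ) (n : ℝ → ℝ) (x : ℝ) : ℝ :=
  σ * deriv n x + deriv ψ x * n x

theorem hasDerivAt_flux {ψ n : ℝ → ℝ} (hψ : ContDiff ℝ 2 ψ) (hn : ContDiff ℝ 2 n) (σ x : ℝ) :
    HasDerivAt (flux ψ σ n)
      (σ * deriv (deriv n) x + deriv (fun y => deriv ψ y * n y) x) x := by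
  have hψ' := hψ.differentiable_deriv_two x
  have hn' := hn.differentiable_deriv_two x
  have hn0 := hn.differentiable two_ne_zero x
  exact (hn'.hasDerivAt.const_mul σ).add (hψ'.fun_mul hn0).hasDerivAt

theorem continuous_flux {ψ n : ℝ → ℝ} (hψ : ContDiff ℝ 2 ψ) (hn : ContDiff ℝ 2 n) (σ : ℝ) :
    Continuous (flux ψ σ n) :=
  continuous_iff_continuousAt.mpr fun x => (hasDerivAt_flux hψ hn σ x).continuousAt

namespace IsFPSolution

variable {I : ℕ} {ψ : Fin I → ℝ → ℝ} {ν : Fin I → Fin I → ℝ} {σ : ℝ} {n : Fin I → ℝ → ℝ}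

theorem hasDerivAt_sum_flux_zero (hn : IsFPSolution ψ ν σ n) (hψ : ∀ i, ContDiff ℝ 2 (ψ i))
    (hν : ∀ i, ν i i = ∑ j ∈ Finset.univ.filter (· ≠ i), ν j i) {x : ℝ} (hx : x ∈ Ioo 0 1) :
    HasDerivAt (fun y => ∑ i, flux (ψ i) σ (n i) y) 0 x := by
  obtain ⟨hC2, -, hPDE, -⟩ := hn
  have hsum := HasDerivAt.fun_sum (u := Finset.univ) fun i _ => hasDerivAt_flux (hψ i) (hC2 i) σ x
  refine hsum.congr_deriv ?_
  rw [← sum_diag_mul_sub_sum_offDiag_eq_zero ν hν (fun j => n j x)]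
  exact Finset.sum_congr rfl fun i _ => by linarith [hPDE i x hx]

theorem sum_flux_eq_zero (hn : IsFPSolution ψ ν σ n) (hψ : ∀ i, ContDiff ℝ 2 (ψ i))
    (hν : ∀ i, ν i i = ∑ j ∈ Finset.univ.filter (· ≠ i), ν j i) {x : ℝ} (hx : x ∈ Icc 0 1) :
    ∑ i, flux (ψ i) σ (n i) x = 0 := by
  have hcont : Continuous fun y => ∑ i, flux (ψ i) σ (n i) y :=
    continuous_finsetSum _ fun i _ => continuous_flux (hψ i) (hn.1 i) σ
  rw [eq_of_hasDerivAt_zero_on_Ioo hcont.continuousOn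
    (fun y hy => hn.hasDerivAt_sum_flux_zero hψ hν hy) hx]
  exact Finset.sum_eq_zero fun i _ => hn.2.2.2 i 0 (by simp)

end IsFPSolution

theorem fp_total_flux_estimate_general {I : ℕ} [NeZero I]
    (ψ : Fin I → ℝ → ℝ) (ν : Fin I → Fin I → ℝ)
    (hψ : ∀ i, ContDiff ℝ 2 (ψ i))
    (hνd : ∀ i, ν i i = ∑ j ∈ Finset.univ.filter (· ≠ i), ν j i)
    (σ : ℝ) (n : Fin I → ℝ → ℝ)
    (hn : IsFPSolution ψ ν σ n) :
    ∀ x ∈ Set.Icc (0:ℝ) 1,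
      deriv (fun y => -σ * Real.log (∑ i, n i y)) x
          = (∑ i, deriv (ψ i) x * n i x) / (∑ i, n i x) ∧
        (⨅ i, deriv (ψ i) x) ≤ deriv (fun y => -σ * Real.log (∑ i, n i y)) x ∧
        deriv (fun y => -σ * Real.log (∑ i, n i y)) x ≤ ⨆ i, deriv (ψ i) x := by
  intro x hx
  have hpos : ∀ i, 0 < n i x := fun i => hn.2.1 i x hx
  have hN : 0 < ∑ i, n i x := Finset.sum_pos (fun i _ => hpos i) Finset.univ_nonempty
  have hN' : HasDerivAt (fun y => ∑ i, n i y) (∑ i, deriv (n i) x) x :=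
    HasDerivAt.fun_sum fun i _ => ((hn.1 i).differentiable two_ne_zero x).hasDerivAt
  have hflux : σ * ∑ i, deriv (n i) x + ∑ i, deriv (ψ i) x * n i x = 0 := by
    simpa only [flux, Finset.sum_add_distrib, Finset.mul_sum] using hn.sum_flux_eq_zero hψ hνd hx
  have hderiv := (hN'.neg_mul_log_of_add_eq_zero hN.ne' hflux).deriv
  rw [hderiv]
  exact ⟨rfl, ciInf_le_sum_mul_div_sum _ (fun i => (hpos i).le) hN,
    sum_mul_div_sum_le_ciSup _ (fun i => (hpos i).le) hN⟩

/-- Formula and bounds (total flux estimate) for the derivative of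
`S^σ = -σ log (∑ i, n i)`. -/
theorem fp_total_flux_estimate {I : ℕ} [NeZero I]
    (ψ : Fin I → ℝ → ℝ) (ν : Fin I → Fin I → ℝ)
    (hψ : ∀ i, ContDiff ℝ 2 (ψ i))
    (hψL : ∀ i, ∃ L : NNReal, LipschitzOnWith L (deriv (deriv (ψ i))) (Set.Icc 0 1))
    (hν : ∀ i j, i ≠ j → 0 < ν i j)
    (hνd : ∀ i, ν i i = ∑ j ∈ Finset.univ.filter (· ≠ i), ν j i)
    (σ : ℝ) (hσ : 0 < σ) (n : Fin I → ℝ → ℝ)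
    (hn : IsFPSolution ψ ν σ n) :
    ∀ x ∈ Set.Icc (0:ℝ) 1,
      deriv (fun y => -σ * Real.log (∑ i, n i y)) x
          = (∑ i, deriv (ψ i) x * n i x) / (∑ i, n i x) ∧
        (⨅ i, deriv (ψ i) x) ≤ deriv (fun y => -σ * Real.log (∑ i, n i y)) x ∧
        deriv (fun y => -σ * Real.log (∑ i, n i y)) x ≤ ⨆ i, deriv (ψ i) x :=
  fp_total_flux_estimate_general ψ ν hψ hνd σ n hn
end

section
/- Let σ > 0 and let (n_1,…,n_I) be a solution of (FP_σ). Then for each i = 1,…,I the phase function R_i := −σ ln n_i satisfies the uniform gradient bound sup_{x∈[0,1]} |R_i'(x)| ≤ max_{x∈[0,1]} |ψ_i'(x)| + √(σ · max_{x∈[0,1]} |ν_ii − ψ_i''(x)|). -/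
open Real Set MeasureTheory Filter

/-!
Let `w = R_i' = -σ n_i'/n_i`. Since the off-diagonal coefficients are positive, `n_i` is a
supersolution of its own scalar equation `-σ n'' - (ψ_i' n)' + ν_ii n ≥ 0`; dividing by `n_i`
turns this into the Riccati inequality `σ w' ≥ w² - ψ_i' w - σ (ν_ii - ψ_i'')`.
Take a point of `[0,1]` where `|w|` is maximal. At an endpoint the zero-flux condition says
`w = ψ_i'`. At an interior point `w' = 0`, so `|w|² ≤ A |w| + σ B` with `A`, `B` the two
suprema of the statement, whence `|w| ≤ A + √(σ B)`.
-/

theorem le_add_sqrt_of_sq_le {t A C : ℝ} (hA : 0 ≤ A) (hC : 0 ≤ C) (h : t ^ 2 ≤ A * t + C) :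
    t ≤ A + √C := by
  nlinarith [Real.sq_sqrt hC, Real.sqrt_nonneg C]

theorem IsCompact.le_ciSup_of_continuousOn {α : Type*} [TopologicalSpace α] {s : Set α}
    {f : α → ℝ} {y : α} (hs : IsCompact s) (hf : ContinuousOn f s) (hy : y ∈ s) :
    f y ≤ ⨆ z : s, f z :=
  le_ciSup (f := fun z : s => f z) (by rw [← image_eq_range]; exact hs.bddAbove_image hf) ⟨y, hy⟩

theorem HasDerivAt.eq_zero_of_isLocalMax_abs {f : ℝ → ℝ} {f' a : ℝ}
    (hmax : IsLocalMax (fun y => |f y|) a) (hf : HasDerivAt f f' a) : f' = 0 := by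
  rcases le_or_gt 0 (f a) with ha | ha
  · refine IsLocalMax.hasDerivAt_eq_zero ?_ hf
    filter_upwards [hmax] with y hy
    simpa [abs_of_nonneg ha] using (le_abs_self (f y)).trans hy
  · refine IsLocalMin.hasDerivAt_eq_zero ?_ hf
    filter_upwards [hmax] with y hy
    have := (neg_abs_le (f y)).trans' (neg_le_neg hy)
    simpa [abs_of_neg ha] using this

theorem hasDerivAt_logDeriv {𝕜 : Type*} [NontriviallyNormedField 𝕜] {f : 𝕜 → 𝕜} {x : 𝕜}
    (hf : DifferentiableAt 𝕜 f x) (hf' : DifferentiableAt 𝕜 (deriv f) x) (hx : f x ≠ 0) :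
    HasDerivAt (logDeriv f) ((deriv (deriv f) x * f x - deriv f x ^ 2) / f x ^ 2) x := by
  rw [sq (deriv f x)]
  exact hf'.hasDerivAt.div hf.hasDerivAt hx

section PhaseGradient

variable {σ c : ℝ} {n φ : ℝ → ℝ} {x : ℝ}

theorem deriv_neg_mul_log_eq (hn : DifferentiableAt ℝ n x) (hx : n x ≠ 0) :
    deriv (fun y => -σ * Real.log (n y)) x = -σ * logDeriv n x := by
  rw [deriv_const_mul _ (hn.log hx), ← Real.deriv_log_comp_eq_logDeriv hn hx]
  rfl

theorem neg_mul_logDeriv_eq_of_zeroFlux (hx : n x ≠ 0) (hflux : σ * deriv n x + φ x * n x = 0) :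
    -σ * logDeriv n x = φ x := by
  rw [logDeriv_apply]
  field_simp
  linarith

theorem sq_neg_mul_logDeriv_le_of_isLocalMax_abs (hσ : 0 < σ) (hn : DifferentiableAt ℝ n x)
    (hn' : DifferentiableAt ℝ (deriv n) x) (hφ : DifferentiableAt ℝ φ x) (hx : 0 < n x)
    (hsuper : 0 ≤ -σ * deriv (deriv n) x - deriv (fun y => φ y * n y) x + c * n x)
    (hmax : IsLocalMax (fun y => |-σ * logDeriv n y|) x) :
    (-σ * logDeriv n x) ^ 2 ≤ φ x * (-σ * logDeriv n x) + σ * (c - deriv φ x) := by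
  have hcrit : deriv (deriv n) x * n x = deriv n x ^ 2 := by
    have := ((hasDerivAt_logDeriv hn hn' hx.ne').const_mul (-σ)).eq_zero_of_isLocalMax_abs hmax
    field_simp at this
    simpa [hσ.ne', sub_eq_zero] using this
  rw [deriv_fun_mul hφ hn] at hsuper
  rw [logDeriv_apply]
  have ha := hx.ne'
  rw [← mul_le_mul_iff_left₀ (pow_pos hx 2)]
  field_simp
  -- after clearing `n x ^ 2` this is `σ n x` times `hsuper`, rewritten with `hcrit`
  nlinarith [mul_nonneg (mul_pos hσ hx).le hsuper]

theorem abs_neg_mul_logDeriv_le_of_isLocalMax_abs {A B : ℝ} (hσ : 0 < σ)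
    (hn : DifferentiableAt ℝ n x) (hn' : DifferentiableAt ℝ (deriv n) x)
    (hφ : DifferentiableAt ℝ φ x) (hx : 0 < n x)
    (hsuper : 0 ≤ -σ * deriv (deriv n) x - deriv (fun y => φ y * n y) x + c * n x)
    (hmax : IsLocalMax (fun y => |-σ * logDeriv n y|) x)
    (hA : |φ x| ≤ A) (hB : |c - deriv φ x| ≤ B) :
    |-σ * logDeriv n x| ≤ A + √(σ * B) := by
  set w := -σ * logDeriv n x
  refine le_add_sqrt_of_sq_le ((abs_nonneg _).trans hA)
    (mul_nonneg hσ.le ((abs_nonneg _).trans hB)) ?_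
  calc |w| ^ 2 = w ^ 2 := sq_abs w
    _ ≤ φ x * w + σ * (c - deriv φ x) :=
      sq_neg_mul_logDeriv_le_of_isLocalMax_abs hσ hn hn' hφ hx hsuper hmax
    _ ≤ |φ x| * |w| + σ * B :=
      add_le_add ((le_abs_self _).trans (abs_mul _ _).le)
        (mul_le_mul_of_nonneg_left ((le_abs_self _).trans hB) hσ.le)
    _ ≤ A * |w| + σ * B := by gcongr

end PhaseGradient

theorem IsFPSolution.scalar_operator_nonneg {I : ℕ} {ψ : Fin I → ℝ → ℝ} {ν : Fin I → Fin I → ℝ}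
    {σ : ℝ} {n : Fin I → ℝ → ℝ} (hn : IsFPSolution ψ ν σ n) (hν : ∀ i j, i ≠ j → 0 < ν i j)
    (i : Fin I) {x : ℝ} (hx : x ∈ Ioo 0 1) :
    0 ≤ -σ * deriv (deriv (n i)) x - deriv (fun y => deriv (ψ i) y * n i y) x + ν i i * n i x := by
  rw [hn.2.2.1 i x hx]
  refine Finset.sum_nonneg fun j hj => (mul_pos (hν i j ?_) ?_).le
  · exact (Finset.mem_filter.mp hj).2.symm
  · exact hn.2.1 j x (Ioo_subset_Icc_self hx)

theorem fp_gradient_bound_general {I : ℕ}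
    (ψ : Fin I → ℝ → ℝ) (ν : Fin I → Fin I → ℝ)
    (hψ : ∀ i, ContDiff ℝ 2 (ψ i))
    (hν : ∀ i j, i ≠ j → 0 < ν i j)
    (σ : ℝ) (hσ : 0 < σ) (n : Fin I → ℝ → ℝ)
    (hn : IsFPSolution ψ ν σ n) :
    ∀ i, ∀ x ∈ Set.Icc (0:ℝ) 1,
      |deriv (fun y => -σ * Real.log (n i y)) x| ≤
        (⨆ y : Set.Icc (0:ℝ) 1, |deriv (ψ i) y|)
          + Real.sqrt (σ * ⨆ y : Set.Icc (0:ℝ) 1, |ν i i - deriv (deriv (ψ i)) y|) := by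
  intro i x hx
  obtain ⟨hnC2, hpos, -, hflux⟩ := id hn
  have hn₁ : Differentiable ℝ (n i) := (hnC2 i).differentiable two_ne_zero
  have hn₂ : Differentiable ℝ (deriv (n i)) := (hnC2 i).differentiable_deriv_two
  have hψ₂ : Differentiable ℝ (deriv (ψ i)) := (hψ i).differentiable_deriv_two
  have hψ₃ : Continuous (deriv (deriv (ψ i))) := ((hψ i).deriv' (n := 1)).continuous_deriv le_rfl
  have hw : ContinuousOn (fun y => |-σ * logDeriv (n i) y|) (Icc 0 1) :=
    (continuousOn_const.mul (hn₂.continuous.continuousOn.div hn₁.continuous.continuousOn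
      fun y hy => (hpos i y hy).ne')).abs
  rw [deriv_neg_mul_log_eq (hn₁ x) (hpos i x hx).ne']
  obtain ⟨x₀, hx₀, hmax⟩ := isCompact_Icc.exists_isMaxOn (nonempty_Icc.2 zero_le_one) hw
  refine (hmax hx).trans ?_
  beta_reduce
  have hA := isCompact_Icc.le_ciSup_of_continuousOn hψ₂.continuous.abs.continuousOn hx₀
  by_cases hint : x₀ ∈ Ioo 0 1
  · exact abs_neg_mul_logDeriv_le_of_isLocalMax_abs hσ (hn₁ x₀) (hn₂ x₀) (hψ₂ x₀)
      (hpos i x₀ hx₀) (hn.scalar_operator_nonneg hν i hint)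
      (hmax.isLocalMax (Icc_mem_nhds hint.1 hint.2)) hA
      (isCompact_Icc.le_ciSup_of_continuousOn (continuous_const.sub hψ₃).abs.continuousOn hx₀)
  · have hbdry : x₀ ∈ ({0, 1} : Set ℝ) := by
      rw [← Icc_sdiff_Ioo_same zero_le_one]; exact ⟨hx₀, hint⟩
    rw [neg_mul_logDeriv_eq_of_zeroFlux (hpos i x₀ hx₀).ne' (hflux i x₀ hbdry)]
    exact hA.trans (le_add_of_nonneg_right (Real.sqrt_nonneg _))

/-- Uniform gradient bound for the phase functions `R i = -σ log (n i)`. -/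
theorem fp_gradient_bound {I : ℕ} [NeZero I]
    (ψ : Fin I → ℝ → ℝ) (ν : Fin I → Fin I → ℝ)
    (hψ : ∀ i, ContDiff ℝ 2 (ψ i))
    (hψL : ∀ i, ∃ L : NNReal, LipschitzOnWith L (deriv (deriv (ψ i))) (Set.Icc 0 1))
    (hν : ∀ i j, i ≠ j → 0 < ν i j)
    (hνd : ∀ i, ν i i = ∑ j ∈ Finset.univ.filter (· ≠ i), ν j i)
    (σ : ℝ) (hσ : 0 < σ) (n : Fin I → ℝ → ℝ)
    (hn : IsFPSolution ψ ν σ n) :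
    ∀ i, ∀ x ∈ Set.Icc (0:ℝ) 1,
      |deriv (fun y => -σ * Real.log (n i y)) x| ≤
        (⨆ y : Set.Icc (0:ℝ) 1, |deriv (ψ i) y|)
          + Real.sqrt (σ * ⨆ y : Set.Icc (0:ℝ) 1, |ν i i - deriv (deriv (ψ i)) y|) :=
  fp_gradient_bound_general ψ ν hψ hν σ hσ n hn
end

section
/- Suppose σ_n → 0 is a sequence of positive numbers, (n_1^{σ_n},…,n_I^{σ_n}) is a solution of (FP_{σ_n}) for each n, and there is a continuous function R : [0,1] → ℝ such that for every i = 1,…,I the phase functions R_i^{σ_n} := −σ_n ln n_i^{σ_n} converge uniformly on [0,1] to R. Then R is a viscosity solution of the Hamilton–Jacobi equation |R'|² + max_{1≤i≤I} (−ψ_i' R') = 0 in (0,1); explicitly: for every C¹ function Φ : (0,1) → ℝ and every local maximum point x₀ ∈ (0,1) of R − Φ one has (Φ'(x₀))² + max_{1≤i≤I} (−ψ_i'(x₀) Φ'(x₀)) ≤ 0, and for every local minimum point x₀ ∈ (0,1) of R − Φ one has (Φ'(x₀))² + max_{1≤i≤I} (−ψ_i'(x₀) Φ'(x₀)) ≥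 0. -/
open Real Set MeasureTheory Filter

open Topology Metric

/-!
With `u_i = -σ log n_i`, the system (FP_σ) reads
`σ u_i'' - u_i'² + ψ_i' u_i' + σ (ν_ii - ψ_i'') = σ Σ_{j≠i} ν_ij n_j / n_i`.
If `R - φ` has a strict maximum at `y₀` for a C² test function `φ`, uniform convergence produces
maxima `y_m → y₀` of `u_i^{σ_m} - φ`, where `u_i' = φ'`, `u_i'' ≤ φ''` and the right-hand side is
nonnegative; letting `σ_m → 0` gives `φ'² ≤ ψ_i' φ'` for every `i`. At a strict minimum one uses
`min_i u_i`, which also converges to `R`: at its minima the minimizing index `i` has the largest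
density `n_i`, so the right-hand side is at most `σ Σ_{j≠i} ν_ij`, and `φ'² ≥ ψ_i' φ'` for some `i`.
A differentiable test function at a non-strict local extremum is reduced to these cases by
quadratic perturbations, which is where closedness of the two inequalities is used.
-/

theorem IsLocalMax.deriv_deriv_nonpos {f : ℝ → ℝ} {a : ℝ} (h : IsLocalMax f a)
    (hc : ContinuousAt f a) : deriv (deriv f) a ≤ 0 := by
  by_contra! hpos
  have hconst : f =ᶠ[𝓝 a] fun _ => f a :=
    ((isLocalMin_of_deriv_deriv_pos hpos h.deriv_eq_zero hc).and h).mono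
      fun x hx => le_antisymm hx.2 hx.1
  exact hpos.ne' (by simpa using hconst.deriv.deriv_eq)

theorem IsLocalMax.deriv_eq_and_deriv_deriv_le {u φ : ℝ → ℝ} {a : ℝ}
    (h : IsLocalMax (fun x => u x - φ x) a) (hu : ContDiffAt ℝ 2 u a) (hφ : ContDiffAt ℝ 2 φ a) :
    deriv u a = deriv φ a ∧ deriv (deriv u) a ≤ deriv (deriv φ) a := by
  have hd : deriv (fun x => u x - φ x) =ᶠ[𝓝 a] fun x => deriv u x - deriv φ x := by
    filter_upwards [hu.eventually (by simp), hφ.eventually (by simp)] with x hux hφx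
    exact deriv_sub (hux.differentiableAt (by simp)) (hφx.differentiableAt (by simp))
  have h1 := h.deriv_eq_zero
  have h2 := h.deriv_deriv_nonpos (hu.continuousAt.sub hφ.continuousAt)
  rw [hd.self_of_nhds] at h1
  rw [hd.deriv_eq, deriv_fun_sub
    ((hu.derivWithin (m := 1) (by norm_num)).differentiableAt one_ne_zero)
    ((hφ.derivWithin (m := 1) (by norm_num)).differentiableAt one_ne_zero)] at h2
  constructor <;> linarith

theorem IsLocalMin.deriv_eq_and_le_deriv_deriv {u φ : ℝ → ℝ} {a : ℝ}
    (h : IsLocalMin (fun x => u x - φ x) a) (hu : ContDiffAt ℝ 2 u a) (hφ : ContDiffAt ℝ 2 φ a) :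
    deriv u a = deriv φ a ∧ deriv (deriv φ) a ≤ deriv (deriv u) a := by
  obtain ⟨h1, h2⟩ := IsLocalMax.deriv_eq_and_deriv_deriv_le (u := φ) (φ := u)
    (by simpa using h.neg) hφ hu
  exact ⟨h1.symm, h2⟩

/-- The paper's phase `R_i^σ = -σ ln n_i` is `phase σ (n i)`. -/
noncomputable def phase (σ : ℝ) (N : ℝ → ℝ) : ℝ → ℝ := fun x => -σ * Real.log (N x)

theorem deriv_phase (σ : ℝ) {N : ℝ → ℝ} {x : ℝ} (hN : DifferentiableAt ℝ N x) (hx : N x ≠ 0) :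
    deriv (phase σ N) x = -σ * (deriv N x / N x) := by
  unfold phase
  rw [deriv_const_mul _ (hN.log hx), deriv.log hN hx]

theorem deriv_deriv_phase (σ : ℝ) {N : ℝ → ℝ} {x : ℝ} (hN : ContDiff ℝ 2 N) (hx : N x ≠ 0) :
    deriv (deriv (phase σ N)) x
      = -σ * ((deriv (deriv N) x * N x - deriv N x ^ 2) / N x ^ 2) := by
  have hN1 : Differentiable ℝ N := hN.differentiable (by norm_num)
  have hloc : deriv (phase σ N) =ᶠ[𝓝 x] fun z => -σ * (deriv N z / N z) :=
    (hN.continuous.continuousAt.eventually_ne hx).mono fun z hz => deriv_phase σ (hN1 z) hz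
  rw [hloc.deriv_eq, ((hN.differentiable_deriv_two x).hasDerivAt.fun_div (hN1 x).hasDerivAt hx
    |>.const_mul (-σ)).deriv]
  ring

theorem phase_le_phase_iff {σ : ℝ} (hσ : 0 < σ) {N M : ℝ → ℝ} {x : ℝ} (hN : 0 < N x)
    (hM : 0 < M x) : phase σ N x ≤ phase σ M x ↔ M x ≤ N x := by
  unfold phase
  rw [neg_mul, neg_mul, neg_le_neg_iff, mul_le_mul_iff_right₀ hσ,
    log_le_log_iff hM hN]

namespace IsFPSolution

variable {I : ℕ} {ψ : Fin I → ℝ → ℝ} {ν : Fin I → Fin I → ℝ} {σ : ℝ} {n : Fin I → ℝ → ℝ}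

theorem contDiffAt_phase (hs : IsFPSolution ψ ν σ n) (i : Fin I) {x : ℝ} (hx : x ∈ Icc 0 1) :
    ContDiffAt ℝ 2 (phase σ (n i)) x :=
  contDiffAt_const.mul ((hs.1 i).contDiffAt.log (hs.2.1 i x hx).ne')

theorem continuousOn_phase (hs : IsFPSolution ψ ν σ n) (i : Fin I) :
    ContinuousOn (phase σ (n i)) (Icc 0 1) :=
  fun _ hx => (hs.contDiffAt_phase i hx).continuousAt.continuousWithinAt

theorem phase_eq (hs : IsFPSolution ψ ν σ n) {i : Fin I} {x : ℝ}
    (hψ : DifferentiableAt ℝ (deriv (ψ i)) x) (hx : x ∈ Ioo 0 1) :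
    σ * deriv (deriv (phase σ (n i))) x - deriv (phase σ (n i)) x ^ 2
        + deriv (ψ i) x * deriv (phase σ (n i)) x + σ * (ν i i - deriv (deriv (ψ i)) x)
      = σ * (∑ j ∈ Finset.univ.filter (· ≠ i), ν i j * n j x) / n i x := by
  obtain ⟨hC2, hpos, hpde, -⟩ := hs
  have hn : n i x ≠ 0 := (hpos i x (Ioo_subset_Icc_self hx)).ne'
  have hn1 : DifferentiableAt ℝ (n i) x := (hC2 i).differentiable (by norm_num) x
  have hprod : deriv (fun y => deriv (ψ i) y * n i y) x
      = deriv (deriv (ψ i)) x * n i x + deriv (ψ i) x * deriv (n i) x :=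
    (hψ.hasDerivAt.mul hn1.hasDerivAt).deriv
  have hpde := hpde i x hx
  rw [hprod] at hpde
  rw [deriv_deriv_phase σ (hC2 i) hn, deriv_phase σ hn1 hn]
  field_simp
  linear_combination σ * n i x * hpde

theorem sq_deriv_le_of_isLocalMax (hs : IsFPSolution ψ ν σ n) {i : Fin I} {φ : ℝ → ℝ} {y : ℝ}
    (hψ : DifferentiableAt ℝ (deriv (ψ i)) y) (hν : ∀ j ≠ i, 0 ≤ ν i j) (hσ : 0 ≤ σ)
    (hy : y ∈ Ioo 0 1) (hφ : ContDiffAt ℝ 2 φ y)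
    (hmax : IsLocalMax (fun x => phase σ (n i) x - φ x) y) :
    deriv φ y ^ 2
      ≤ deriv (ψ i) y * deriv φ y + σ * (deriv (deriv φ) y - deriv (deriv (ψ i)) y + ν i i) := by
  have hpos := hs.2.1
  have hyI := Ioo_subset_Icc_self hy
  obtain ⟨h1, h2⟩ := hmax.deriv_eq_and_deriv_deriv_le (hs.contDiffAt_phase i hyI) hφ
  have heq := hs.phase_eq hψ hy
  have hrhs : 0 ≤ σ * (∑ j ∈ Finset.univ.filter (· ≠ i), ν i j * n j y) / n i y :=
    div_nonneg (mul_nonneg hσ (Finset.sum_nonneg fun j hj =>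
      mul_nonneg (hν j (Finset.mem_filter.1 hj).2) (hpos j y hyI).le)) (hpos i y hyI).le
  rw [h1] at heq
  linarith [mul_le_mul_of_nonneg_left h2 hσ]

theorem deriv_mul_le_sq_of_isLocalMin (hs : IsFPSolution ψ ν σ n) {i : Fin I} {φ : ℝ → ℝ}
    {y : ℝ} (hψ : DifferentiableAt ℝ (deriv (ψ i)) y) (hν : ∀ j ≠ i, 0 ≤ ν i j) (hσ : 0 ≤ σ)
    (hy : y ∈ Ioo 0 1) (hφ : ContDiffAt ℝ 2 φ y) (hlargest : ∀ j, n j y ≤ n i y)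
    (hmin : IsLocalMin (fun x => phase σ (n i) x - φ x) y) :
    deriv (ψ i) y * deriv φ y + σ * (deriv (deriv φ) y - deriv (deriv (ψ i)) y + ν i i
        - ∑ j ∈ Finset.univ.filter (· ≠ i), ν i j) ≤ deriv φ y ^ 2 := by
  have hni := hs.2.1 i y (Ioo_subset_Icc_self hy)
  obtain ⟨h1, h2⟩ := hmin.deriv_eq_and_le_deriv_deriv
    (hs.contDiffAt_phase i (Ioo_subset_Icc_self hy)) hφ
  have heq := hs.phase_eq hψ hy
  have hsum : ∑ j ∈ Finset.univ.filter (· ≠ i), ν i j * n j y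
      ≤ (∑ j ∈ Finset.univ.filter (· ≠ i), ν i j) * n i y := by
    rw [Finset.sum_mul]
    exact Finset.sum_le_sum fun j hj =>
      mul_le_mul_of_nonneg_left (hlargest j) (hν j (Finset.mem_filter.1 hj).2)
  have hrhs : σ * (∑ j ∈ Finset.univ.filter (· ≠ i), ν i j * n j y) / n i y
      ≤ σ * ∑ j ∈ Finset.univ.filter (· ≠ i), ν i j := by
    rw [div_le_iff₀ hni, mul_assoc]
    exact mul_le_mul_of_nonneg_left hsum hσ
  rw [h1] at heq
  linarith [mul_le_mul_of_nonneg_left h2 hσ]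

end IsFPSolution

theorem TendstoUniformlyOn.exists_tendsto_isLocalMax {α ι : Type*} [TopologicalSpace α]
    {l : Filter ι} [l.NeBot] {v : ι → α → ℝ} {g : α → ℝ} {K : Set α} {y₀ : α}
    (hv : TendstoUniformlyOn v g l K) (hvc : ∀ m, ContinuousOn (v m) K) (hK : IsCompact K)
    (hKy : K ∈ 𝓝 y₀) (hstrict : ∀ x ∈ K, x ≠ y₀ → g x < g y₀) :
    ∃ y : ι → α, Tendsto y l (𝓝 y₀) ∧ ∀ᶠ m in l, IsLocalMax (v m) (y m) := by
  have hy₀ : y₀ ∈ K := mem_of_mem_nhds hKy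
  choose y hyK hymax using fun m => hK.exists_isMaxOn ⟨y₀, hy₀⟩ (hvc m)
  have hlim : Tendsto y l (𝓝 y₀) := by
    refine tendsto_iff_forall_eventually_mem.2 fun U hU => ?_
    rcases (K \ interior U).eq_empty_or_nonempty with hC | hC
    · exact .of_forall fun m => interior_subset (by_contra fun h => hC.subset ⟨hyK m, h⟩)
    obtain ⟨z, hz, hzmax⟩ :=
      (hK.diff isOpen_interior).exists_isMaxOn hC
        ((hv.continuousOn (.of_forall hvc)).mono sdiff_subset)
    have hgap : g z < g y₀ :=
      hstrict z hz.1 fun h => hz.2 (h ▸ mem_interior_iff_mem_nhds.2 hU)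
    have hfar : ∀ᶠ m in l, ∀ x ∈ K \ interior U, v m x < (g z + g y₀) / 2 :=
      (hv.mono sdiff_subset).eventually_forall_lt (by linarith) hzmax
    have hnear : ∀ᶠ m in l, (g z + g y₀) / 2 < v m y₀ :=
      (hv.tendsto_at hy₀).eventually (lt_mem_nhds (by linarith))
    filter_upwards [hfar, hnear] with m hm1 hm2
    by_contra hmU
    exact (hm1 (y m) ⟨hyK m, fun h => hmU (interior_subset h)⟩).not_ge
      (hm2.le.trans (hymax m hy₀))
  exact ⟨y, hlim, (hlim.eventually (interior_mem_nhds.2 hKy)).mono fun m hm =>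
    (hymax m).isLocalMax (mem_interior_iff_mem_nhds.1 hm)⟩

theorem tendstoUniformlyOn_finset_inf' {ι α κ : Type*} {l : Filter κ} {s : Finset ι}
    (hs : s.Nonempty) {F : ι → κ → α → ℝ} {f : α → ℝ} {K : Set α}
    (h : ∀ i ∈ s, TendstoUniformlyOn (F i) f l K) :
    TendstoUniformlyOn (fun m x => s.inf' hs fun i => F i m x) f l K := by
  rw [Metric.tendstoUniformlyOn_iff]
  intro ε hε
  filter_upwards [(eventually_all_finset s).2 fun i hi =>
    Metric.tendstoUniformlyOn_iff.1 (h i hi) ε hε] with m hm x hx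
  obtain ⟨i, hi, heq⟩ := s.exists_mem_eq_inf' hs fun i => F i m x
  rw [heq]
  exact hm i hi x hx

theorem exists_le_of_tendsto_of_eventually_exists_le {ι β α : Type*} [Finite ι]
    [LinearOrder α] [TopologicalSpace α] [OrderClosedTopology α] {l : Filter β} [l.NeBot]
    {F G : ι → β → α} {a b : ι → α} (hF : ∀ i, Tendsto (F i) l (𝓝 (a i)))
    (hG : ∀ i, Tendsto (G i) l (𝓝 (b i))) (h : ∀ᶠ m in l, ∃ i, F i m ≤ G i m) :
    ∃ i, a i ≤ b i := by
  by_contra! hlt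
  obtain ⟨m, ⟨i, hi⟩, hm⟩ :=
    (h.and (eventually_all.2 fun i => (hG i).eventually_lt (hF i) (hlt i))).exists
  exact (hm i).not_ge hi

theorem IsLocalMax.eventually_le_add_of_hasDerivAt {R Φ : ℝ → ℝ} {x₀ p c : ℝ}
    (h : IsLocalMax (fun x => R x - Φ x) x₀) (hΦ : HasDerivAt Φ p x₀) (hc : 0 < c) :
    ∀ᶠ x in 𝓝 x₀, R x ≤ R x₀ + p * (x - x₀) + c * |x - x₀| := by
  filter_upwards [h, (hasDerivAt_iff_isLittleO.1 hΦ).bound hc] with x hmax hΦx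
  rw [Real.norm_eq_abs, Real.norm_eq_abs, smul_eq_mul] at hΦx
  linarith [(abs_le.1 hΦx).2]

/-- The test function is `p (x - x₀) + (2c/δ) (x - x₀)² + (x - y)²`: the quadratic term pushes
the maximum `y` into the open ball, and `(x - y)²` makes it strict. -/
theorem exists_contDiff_strict_max_near {R : ℝ → ℝ} {x₀ p c δ : ℝ} (hδ : 0 < δ) (hc : 0 < c)
    (hR : ContinuousOn R (closedBall x₀ δ))
    (hle : ∀ x ∈ closedBall x₀ δ, R x ≤ R x₀ + p * (x - x₀) + c * |x - x₀|) :
    ∃ y ∈ ball x₀ δ, ∃ φ : ℝ → ℝ, ContDiff ℝ 2 φ ∧ |deriv φ y - p| ≤ 4 * c ∧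
      ∀ x ∈ closedBall x₀ δ, x ≠ y → R x - φ x < R y - φ y := by
  set a := 2 * c / δ
  have ha : a * δ = 2 * c := div_mul_cancel₀ _ hδ.ne'
  have hcont : ContinuousOn (fun x => R x - (p * (x - x₀) + a * (x - x₀) ^ 2))
      (closedBall x₀ δ) := hR.sub (by fun_prop)
  obtain ⟨y, hyB, hymax⟩ :=
    (isCompact_closedBall x₀ δ).exists_isMaxOn (nonempty_closedBall.2 hδ.le) hcont
  have hy : y ∈ ball x₀ δ := by
    by_contra hy
    have hd : |y - x₀| = δ := by
      rw [← Real.dist_eq]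
      exact le_antisymm (mem_closedBall.1 hyB) (not_lt.1 hy)
    have h1 : R x₀ ≤ R y - (p * (y - x₀) + a * (y - x₀) ^ 2) := by
      simpa using hymax (mem_closedBall_self hδ.le)
    have h2 := hle y hyB
    have h3 : a * (y - x₀) ^ 2 = 2 * c * δ := by
      rw [← sq_abs, hd]
      linear_combination δ * ha
    rw [hd] at h2
    linarith [mul_pos hc hδ]
  have hderiv : HasDerivAt (fun x => p * (x - x₀) + a * (x - x₀) ^ 2 + (x - y) ^ 2)
      (p + 2 * a * (y - x₀)) y := by
    have h₀ := (hasDerivAt_id' y).sub_const x₀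
    have h₁ := (hasDerivAt_id' y).sub_const y
    exact (((h₀.const_mul p).add ((h₀.pow 2).const_mul a)).add (h₁.pow 2)).congr_deriv (by ring)
  refine ⟨y, hy, fun x => p * (x - x₀) + a * (x - x₀) ^ 2 + (x - y) ^ 2, by fun_prop, ?_,
    fun x hx hxy => ?_⟩
  · rw [hderiv.deriv, add_sub_cancel_left, abs_mul, abs_of_pos (by positivity : 0 < 2 * a)]
    calc 2 * a * |y - x₀| ≤ 2 * a * δ := by
          gcongr
          exact (mem_ball.1 hy).le
      _ = 4 * c := by linear_combination 2 * ha
  · have h1 : R x - (p * (x - x₀) + a * (x - x₀) ^ 2)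
        ≤ R y - (p * (y - x₀) + a * (y - x₀) ^ 2) := hymax hx
    linarith [sq_pos_of_ne_zero (sub_ne_zero.2 hxy)]

theorem IsLocalMax.mem_of_forall_contDiff_strict_max {R Φ : ℝ → ℝ} {U : Set ℝ} {x₀ : ℝ}
    {S : Set (ℝ × ℝ)} (h : IsLocalMax (fun x => R x - Φ x) x₀) (hΦ : DifferentiableAt ℝ Φ x₀)
    (hU : U ∈ 𝓝 x₀) (hR : ContinuousOn R U) (hS : IsClosed S)
    (htest : ∀ y (φ : ℝ → ℝ), ContDiff ℝ 2 φ → ∀ B ⊆ U, IsCompact B → B ∈ 𝓝 y →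
      (∀ x ∈ B, x ≠ y → R x - φ x < R y - φ y) → (y, deriv φ y) ∈ S) :
    (x₀, deriv Φ x₀) ∈ S := by
  rw [← hS.closure_eq, Metric.mem_closure_iff]
  intro ε hε
  obtain ⟨δ, hδ, hball⟩ := nhds_basis_closedBall.mem_iff.1 <|
    inter_mem (inter_mem hU (ball_mem_nhds x₀ (half_pos hε)))
      (h.eventually_le_add_of_hasDerivAt hΦ.hasDerivAt (c := ε / 8) (by positivity))
  obtain ⟨y, hy, φ, hφ, hq, hstrict⟩ := exists_contDiff_strict_max_near hδ (by positivity)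
    (hR.mono fun x hx => (hball hx).1.1) fun x hx => (hball hx).2
  refine ⟨(y, deriv φ y), htest y φ hφ _ (fun x hx => (hball hx).1.1) (isCompact_closedBall x₀ δ)
    (mem_of_superset (isOpen_ball.mem_nhds hy) ball_subset_closedBall) hstrict, ?_⟩
  have hyx₀ : dist y x₀ < ε / 2 := (hball (ball_subset_closedBall hy)).1.2
  rw [Prod.dist_eq, max_lt_iff, dist_comm x₀, Real.dist_eq (deriv Φ x₀), abs_sub_comm]
  constructor <;> linarith

theorem IsLocalMin.mem_of_forall_contDiff_strict_min {R Φ : ℝ → ℝ} {U : Set ℝ} {x₀ : ℝ}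
    {S : Set (ℝ × ℝ)} (h : IsLocalMin (fun x => R x - Φ x) x₀) (hΦ : DifferentiableAt ℝ Φ x₀)
    (hU : U ∈ 𝓝 x₀) (hR : ContinuousOn R U) (hS : IsClosed S)
    (htest : ∀ y (φ : ℝ → ℝ), ContDiff ℝ 2 φ → ∀ B ⊆ U, IsCompact B → B ∈ 𝓝 y →
      (∀ x ∈ B, x ≠ y → R y - φ y < R x - φ x) → (y, deriv φ y) ∈ S) :
    (x₀, deriv Φ x₀) ∈ S := by
  have := IsLocalMax.mem_of_forall_contDiff_strict_max (R := fun x => -R x) (Φ := fun x => -Φ x)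
    (S := (fun z : ℝ × ℝ => (z.1, -z.2)) ⁻¹' S) (by simpa [neg_add_eq_sub] using h.neg)
    hΦ.neg hU hR.neg
    (hS.preimage (by fun_prop)) fun y φ hφ B hBU hB hBy hstrict => by
      simpa using htest y (fun x => -φ x) hφ.neg B hBU hB hBy fun x hx hxy => by
        linarith [hstrict x hx hxy]
  simpa using this

section VanishingViscosity

variable {I : ℕ} {ψ : Fin I → ℝ → ℝ} {ν : Fin I → Fin I → ℝ} {σs : ℕ → ℝ}
  {n : ℕ → Fin I → ℝ → ℝ} {R φ : ℝ → ℝ} {B : Set ℝ} {y₀ : ℝ}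

theorem sq_deriv_le_of_strict_max {i : Fin I} (hψ : ContDiff ℝ 2 (ψ i))
    (hν : ∀ j ≠ i, 0 ≤ ν i j) (hσs : ∀ m, 0 < σs m) (hσs0 : Tendsto σs atTop (𝓝 0))
    (hn : ∀ m, IsFPSolution ψ ν (σs m) (n m))
    (hconv : TendstoUniformlyOn (fun m => phase (σs m) (n m i)) R atTop B)
    (hφ : ContDiff ℝ 2 φ) (hB : IsCompact B) (hB01 : B ⊆ Ioo 0 1) (hBy : B ∈ 𝓝 y₀)
    (hstrict : ∀ x ∈ B, x ≠ y₀ → R x - φ x < R y₀ - φ y₀) :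
    deriv φ y₀ ^ 2 ≤ deriv (ψ i) y₀ * deriv φ y₀ := by
  have hconst : TendstoUniformlyOn (fun _ : ℕ => φ) φ atTop B :=
    fun _ hu => Eventually.of_forall fun _ _ _ => refl_mem_uniformity hu
  obtain ⟨y, hy, hmax⟩ := (hconv.fun_sub hconst).exists_tendsto_isLocalMax
    (fun m => (((hn m).continuousOn_phase i).mono (hB01.trans Ioo_subset_Icc_self)).sub
      hφ.continuous.continuousOn) hB hBy hstrict
  have hineq : ∀ᶠ m in atTop, deriv φ (y m) ^ 2 ≤ deriv (ψ i) (y m) * deriv φ (y m)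
      + σs m * (deriv (deriv φ) (y m) - deriv (deriv (ψ i)) (y m) + ν i i) := by
    filter_upwards [hmax, hy hBy] with m hm hmB
    exact (hn m).sq_deriv_le_of_isLocalMax (hψ.differentiable_deriv_two _) hν (hσs m).le
      (hB01 hmB) hφ.contDiffAt hm
  have hφ' : Continuous (deriv φ) := hφ.continuous_deriv (by norm_num)
  have hψ' : Continuous (deriv (ψ i)) := hψ.continuous_deriv (by norm_num)
  have hlhs : Continuous fun x => deriv φ x ^ 2 := by fun_prop
  have hrhs : Continuous fun z : ℝ × ℝ => deriv (ψ i) z.1 * deriv φ z.1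
      + z.2 * (deriv (deriv φ) z.1 - deriv (deriv (ψ i)) z.1 + ν i i) := by fun_prop
  refine le_of_tendsto_of_tendsto ((hlhs.tendsto y₀).comp hy) ?_ hineq
  simpa [Function.comp_def] using (hrhs.tendsto (y₀, 0)).comp (hy.prodMk_nhds hσs0)

theorem exists_deriv_mul_le_sq_of_strict_min [NeZero I] (hψ : ∀ i, ContDiff ℝ 2 (ψ i))
    (hν : ∀ i, ∀ j ≠ i, 0 ≤ ν i j) (hσs : ∀ m, 0 < σs m) (hσs0 : Tendsto σs atTop (𝓝 0))
    (hn : ∀ m, IsFPSolution ψ ν (σs m) (n m))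
    (hconv : ∀ i, TendstoUniformlyOn (fun m => phase (σs m) (n m i)) R atTop B)
    (hφ : ContDiff ℝ 2 φ) (hB : IsCompact B) (hB01 : B ⊆ Ioo 0 1) (hBy : B ∈ 𝓝 y₀)
    (hstrict : ∀ x ∈ B, x ≠ y₀ → R y₀ - φ y₀ < R x - φ x) :
    ∃ i, deriv (ψ i) y₀ * deriv φ y₀ ≤ deriv φ y₀ ^ 2 := by
  have hBI : B ⊆ Icc 0 1 := hB01.trans Ioo_subset_Icc_self
  have hconst : TendstoUniformlyOn (fun _ : ℕ => φ) φ atTop B :=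
    fun _ hu => Eventually.of_forall fun _ _ _ => refl_mem_uniformity hu
  set w : ℕ → ℝ → ℝ := fun m x => Finset.univ.inf' Finset.univ_nonempty
    fun i => phase (σs m) (n m i) x
  obtain ⟨y, hy, hmax⟩ := (hconst.fun_sub (tendstoUniformlyOn_finset_inf' (F := fun i m =>
      phase (σs m) (n m i)) Finset.univ_nonempty fun i _ => hconv i)).exists_tendsto_isLocalMax
    (fun m => hφ.continuous.continuousOn.sub (ContinuousOn.finset_inf'_apply _ fun i _ =>
      ((hn m).continuousOn_phase i).mono hBI)) hB hBy fun x hx hxy => by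
        linarith [hstrict x hx hxy]
  have hineq : ∀ᶠ m in atTop, ∃ i, deriv (ψ i) (y m) * deriv φ (y m)
      + σs m * (deriv (deriv φ) (y m) - deriv (deriv (ψ i)) (y m) + ν i i
        - ∑ j ∈ Finset.univ.filter (· ≠ i), ν i j) ≤ deriv φ (y m) ^ 2 := by
    filter_upwards [hmax, hy hBy] with m hm hmB
    obtain ⟨i, -, hi⟩ := Finset.exists_mem_eq_inf' Finset.univ_nonempty
      fun i => phase (σs m) (n m i) (y m)
    have hw : ∀ j x, w m x ≤ phase (σs m) (n m j) x := fun j x =>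
      Finset.inf'_le _ (Finset.mem_univ j)
    refine ⟨i, (hn m).deriv_mul_le_sq_of_isLocalMin ((hψ i).differentiable_deriv_two _) (hν i)
      (hσs m).le (hB01 hmB) hφ.contDiffAt (fun j => ?_) ?_⟩
    · refine (phase_le_phase_iff (hσs m) ((hn m).2.1 i _ (hBI hmB))
        ((hn m).2.1 j _ (hBI hmB))).1 ?_
      exact hi ▸ hw j (y m)
    · filter_upwards [hm] with x hx
      linarith [hw i x, hi]
  have hφ' : Continuous (deriv φ) := hφ.continuous_deriv (by norm_num)
  have hψ' : ∀ i, Continuous (deriv (ψ i)) := fun i => (hψ i).continuous_deriv (by norm_num)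
  have hlhs : ∀ i, Continuous fun z : ℝ × ℝ => deriv (ψ i) z.1 * deriv φ z.1
      + z.2 * (deriv (deriv φ) z.1 - deriv (deriv (ψ i)) z.1 + ν i i
        - ∑ j ∈ Finset.univ.filter (· ≠ i), ν i j) := fun i => by fun_prop
  have hrhs : Continuous fun x => deriv φ x ^ 2 := by fun_prop
  refine exists_le_of_tendsto_of_eventually_exists_le (fun i => ?_)
    (fun _ => (hrhs.tendsto y₀).comp hy) hineq
  simpa [Function.comp_def] using ((hlhs i).tendsto (y₀, 0)).comp (hy.prodMk_nhds hσs0)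

end VanishingViscosity

theorem fp_viscosity_solution_general {I : ℕ} [NeZero I]
    (ψ : Fin I → ℝ → ℝ) (ν : Fin I → Fin I → ℝ)
    (hψ : ∀ i, ContDiff ℝ 2 (ψ i))
    (hν : ∀ i j, i ≠ j → 0 < ν i j)
    (σs : ℕ → ℝ) (hσs : ∀ m, 0 < σs m) (hσs0 : Tendsto σs atTop (nhds 0))
    (n : ℕ → Fin I → ℝ → ℝ) (hn : ∀ m, IsFPSolution ψ ν (σs m) (n m))
    (R : ℝ → ℝ) (hR : ContinuousOn R (Set.Icc 0 1))
    (hconv : ∀ i : Fin I,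
      TendstoUniformlyOn (fun m x => -(σs m) * Real.log (n m i x)) R atTop
        (Set.Icc 0 1)) :
    ∀ Φ : ℝ → ℝ, (∀ x ∈ Set.Ioo (0:ℝ) 1, DifferentiableAt ℝ Φ x) →
      ContinuousOn (deriv Φ) (Set.Ioo 0 1) →
      ∀ x₀ ∈ Set.Ioo (0:ℝ) 1,
        (IsLocalMax (fun x => R x - Φ x) x₀ →
          (deriv Φ x₀) ^ 2 + (⨆ i, -deriv (ψ i) x₀ * deriv Φ x₀) ≤ 0) ∧
        (IsLocalMin (fun x => R x - Φ x) x₀ →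
          0 ≤ (deriv Φ x₀) ^ 2 + (⨆ i, -deriv (ψ i) x₀ * deriv Φ x₀)) := by
  intro Φ hΦ _ x₀ hx₀
  have hν' : ∀ i, ∀ j ≠ i, 0 ≤ ν i j := fun i j hj => (hν i j hj.symm).le
  have hψ' : ∀ i, Continuous (deriv (ψ i)) := fun i => (hψ i).continuous_deriv (by norm_num)
  have hconv' : ∀ B ⊆ Ioo 0 1, ∀ i,
      TendstoUniformlyOn (fun m => phase (σs m) (n m i)) R atTop B :=
    fun B hB i => (hconv i).mono (hB.trans Ioo_subset_Icc_self)
  have hU : Ioo (0 : ℝ) 1 ∈ 𝓝 x₀ := Ioo_mem_nhds hx₀.1 hx₀.2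
  refine ⟨fun hmax => ?_, fun hmin => ?_⟩
  · have hsub : ∀ i, deriv Φ x₀ ^ 2 ≤ deriv (ψ i) x₀ * deriv Φ x₀ :=
      hmax.mem_of_forall_contDiff_strict_max (S := {z | ∀ i, z.2 ^ 2 ≤ deriv (ψ i) z.1 * z.2})
        (hΦ x₀ hx₀) hU (hR.mono Ioo_subset_Icc_self)
        (by simpa only [ofPred_forall] using
          isClosed_iInter fun i => isClosed_le (by fun_prop) (by fun_prop))
        fun y φ hφ B hBU hB hBy hstrict i => sq_deriv_le_of_strict_max (hψ i) (hν' i) hσs hσs0 hn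
          (hconv' B hBU i) hφ hB hBU hBy hstrict
    have := ciSup_le fun i =>
      (by linarith [hsub i] : -deriv (ψ i) x₀ * deriv Φ x₀ ≤ -deriv Φ x₀ ^ 2)
    linarith
  · obtain ⟨i, hi⟩ : ∃ i, deriv (ψ i) x₀ * deriv Φ x₀ ≤ deriv Φ x₀ ^ 2 :=
      hmin.mem_of_forall_contDiff_strict_min (S := {z | ∃ i, deriv (ψ i) z.1 * z.2 ≤ z.2 ^ 2})
        (hΦ x₀ hx₀) hU (hR.mono Ioo_subset_Icc_self)
        (by simpa only [ofPred_exists] using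
          isClosed_iUnion_of_finite fun i => isClosed_le (by fun_prop) (by fun_prop))
        fun y φ hφ B hBU hB hBy hstrict => exists_deriv_mul_le_sq_of_strict_min hψ hν' hσs hσs0
          hn (hconv' B hBU) hφ hB hBU hBy hstrict
    have := le_ciSup (Set.finite_range fun i => -deriv (ψ i) x₀ * deriv Φ x₀).bddAbove i
    linarith

/-- The uniform limit `R` of the phase functions is a viscosity solution of
`|R'|² + max_i (-ψ_i' R') = 0` in `(0,1)`. -/
theorem fp_viscosity_solution {I : ℕ} [NeZero I]
    (ψ : Fin I → ℝ → ℝ) (ν : Fin I → Fin I → ℝ)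
    (hψ : ∀ i, ContDiff ℝ 2 (ψ i))
    (hψL : ∀ i, ∃ L : NNReal, LipschitzOnWith L (deriv (deriv (ψ i))) (Set.Icc 0 1))
    (hν : ∀ i j, i ≠ j → 0 < ν i j)
    (hνd : ∀ i, ν i i = ∑ j ∈ Finset.univ.filter (· ≠ i), ν j i)
    (σs : ℕ → ℝ) (hσs : ∀ m, 0 < σs m) (hσs0 : Tendsto σs atTop (nhds 0))
    (n : ℕ → Fin I → ℝ → ℝ) (hn : ∀ m, IsFPSolution ψ ν (σs m) (n m))
    (R : ℝ → ℝ) (hR : ContinuousOn R (Set.Icc 0 1))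
    (hconv : ∀ i : Fin I,
      TendstoUniformlyOn (fun m x => -(σs m) * Real.log (n m i x)) R atTop
        (Set.Icc 0 1)) :
    ∀ Φ : ℝ → ℝ, (∀ x ∈ Set.Ioo (0:ℝ) 1, DifferentiableAt ℝ Φ x) →
      ContinuousOn (deriv Φ) (Set.Ioo 0 1) →
      ∀ x₀ ∈ Set.Ioo (0:ℝ) 1,
        (IsLocalMax (fun x => R x - Φ x) x₀ →
          (deriv Φ x₀) ^ 2 + (⨆ i, -deriv (ψ i) x₀ * deriv Φ x₀) ≤ 0) ∧
        (IsLocalMin (fun x => R x - Φ x) x₀ →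
          0 ≤ (deriv Φ x₀) ^ 2 + (⨆ i, -deriv (ψ i) x₀ * deriv Φ x₀)) :=
  fp_viscosity_solution_general ψ ν hψ hν σs hσs hσs0 n hn R hR hconv
end
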